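/- Assume n ≥ 1. For every χ ∈ ℝ^{n+1} and every real number γ, writing χ₀ = B₁ᵀ·χ, the identity B_{n+1}ᵀ·𝒬·( −(χ₀·𝒰·𝒬⁻¹·B₁ − γ·𝒬⁻¹·B₁) + 𝒰·χ ) = −α·n·B_{n+1}ᵀ·𝒬·χ holds. -/

import Mathlib

open Matrix

/-- The nilpotent shift matrix `𝒰`, with `(i,j)` entry `1` if `j = i+1` and `0` otherwise. -/
noncomputable def Umat (n : ℕ) : Matrix (Fin (n+1)) (Fin (n+1)) ℝ :=
  Matrix.of fun i j => if (j : ℕ) = (i : ℕ) + 1 then 1 else 0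

/-- The diagonal matrix `𝒟 = diag(0, 1, …, n)`. -/
noncomputable def Dmat (n : ℕ) : Matrix (Fin (n+1)) (Fin (n+1)) ℝ :=
  Matrix.diagonal fun i => (i : ℝ)

/-- The first standard basis vector `B₁ = e₀` of `ℝ^{n+1}`. -/
noncomputable def B1 (n : ℕ) : Fin (n+1) → ℝ := Pi.single 0 1

/-- The last standard basis vector `B_{n+1} = e_n` of `ℝ^{n+1}`. -/
noncomputable def Blast (n : ℕ) : Fin (n+1) → ℝ := Pi.single (Fin.last n) 1

/-- The matrix `𝒬` whose `k`-th column is `(𝒰 - α·𝒟)^{n-k}·B_{n+1}`. -/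
noncomputable def Qmat (n : ℕ) (α : ℝ) : Matrix (Fin (n+1)) (Fin (n+1)) ℝ :=
  Matrix.of fun i k => ((Umat n - α • Dmat n) ^ (n - (k : ℕ))).mulVec (Blast n) i

/-- The diagonal matrix `Λ(c) = diag(1, c, c², …, cⁿ)`. -/
noncomputable def Lam (n : ℕ) (c : ℝ) : Matrix (Fin (n+1)) (Fin (n+1)) ℝ :=
  Matrix.diagonal fun i => c ^ (i : ℕ)

/-- The matrix `𝒜 = -𝒬⁻¹·(𝒰 - α·𝒟)^{n+1}·B_{n+1}·B₁ᵀ`. -/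
noncomputable def Amat (n : ℕ) (α : ℝ) : Matrix (Fin (n+1)) (Fin (n+1)) ℝ :=
  -((Qmat n α)⁻¹ * (Umat n - α • Dmat n) ^ (n + 1) * Matrix.vecMulVec (Blast n) (B1 n))

lemma Umat_mulVec (n : ℕ) (x : Fin (n+1) → ℝ) (i : Fin (n+1)) :
    (Umat n).mulVec x i = if h : (i:ℕ) < n then x ⟨(i:ℕ)+1, by omega⟩ else 0 := by
  unfold Umat
  simp only [Matrix.mulVec, dotProduct, Matrix.of_apply]
  split
  · next h =>
    rw [Finset.sum_eq_single (⟨(i:ℕ)+1, by omega⟩ : Fin (n+1))]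
    · simp
    · intro b _ hb
      rw [if_neg, zero_mul]
      intro hbe; exact hb (Fin.ext hbe)
    · simp
  · next h =>
    apply Finset.sum_eq_zero
    intro b _
    rw [if_neg, zero_mul]
    intro hbe; omega

lemma M_mulVec (n : ℕ) (α : ℝ) (x : Fin (n+1) → ℝ) (i : Fin (n+1)) :
    (Umat n - α • Dmat n).mulVec x i
      = (if h : (i:ℕ) < n then x ⟨(i:ℕ)+1, by omega⟩ else 0) - α * i * x i := by
  rw [Matrix.sub_mulVec, Pi.sub_apply, Umat_mulVec]
  congr 1
  rw [Matrix.smul_mulVec, Pi.smul_apply, Dmat, Matrix.mulVec_diagonal]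
  simp [smul_eq_mul]; ring

lemma tri (n : ℕ) (α : ℝ) : ∀ m, m ≤ n → ∀ i : Fin (n+1), (i:ℕ) ≤ n - m →
    ((Umat n - α • Dmat n)^m).mulVec (Blast n) i = if (i:ℕ) = n - m then 1 else 0 := by
  intro m
  induction m with
  | zero =>
    intro _ i hi
    rw [pow_zero, Matrix.one_mulVec, Blast, Pi.single_apply]
    have : (i = Fin.last n) ↔ ((i:ℕ) = n - 0) := by
      rw [Fin.ext_iff]; simp [Fin.last]
    simp only [this]
  | succ m ih =>
    intro hm i hi
    rw [pow_succ', ← Matrix.mulVec_mulVec, M_mulVec]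
    have hilt : (i:ℕ) < n := by omega
    rw [dif_pos hilt]
    have h1 : ((Umat n - α • Dmat n)^m).mulVec (Blast n) ⟨(i:ℕ)+1, by omega⟩
        = if ((i:ℕ)+1 : ℕ) = n - m then 1 else 0 := by
      exact ih (by omega) _ (by simp; omega)
    have h2 : ((Umat n - α • Dmat n)^m).mulVec (Blast n) i = 0 := by
      rw [ih (by omega) i (by omega), if_neg (by omega)]
    rw [h1, h2, mul_zero, sub_zero]
    have : ((i:ℕ)+1 = n - m) ↔ ((i:ℕ) = n - (m+1)) := by omega
    simp only [this]

lemma diagQ (n : ℕ) (α : ℝ) : ∀ m,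
    ((Umat n - α • Dmat n)^m).mulVec (Blast n) (Fin.last n) = (-(α * n))^m := by
  intro m
  induction m with
  | zero => simp [Blast, Matrix.one_mulVec]
  | succ m ih =>
    rw [pow_succ', ← Matrix.mulVec_mulVec, M_mulVec, dif_neg (by simp [Fin.last]), ih]
    simp [Fin.last, pow_succ]
    ring

lemma Qmat_apply (n : ℕ) (α : ℝ) (i k : Fin (n+1)) (h : (i:ℕ) ≤ (k:ℕ)) :
    Qmat n α i k = if i = k then 1 else 0 := by
  have hk : (k:ℕ) ≤ n := by omega
  rw [Qmat, Matrix.of_apply, tri n α (n - (k:ℕ)) (by omega) i (by omega)]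
  have : ((i:ℕ) = n - (n - (k:ℕ))) ↔ i = k := by rw [Fin.ext_iff]; omega
  simp only [this]

lemma detQ (n : ℕ) (α : ℝ) : (Qmat n α).det = 1 := by
  rw [Matrix.det_of_lowerTriangular (Qmat n α)]
  · apply Finset.prod_eq_one
    intro i _
    rw [Qmat_apply n α i i le_rfl, if_pos rfl]
  · intro i j hij
    have h : i < j := hij
    rw [Qmat_apply n α i j h.le, if_neg (show ¬ i = j from Fin.ne_of_lt h)]

lemma blast_Q (n : ℕ) (α : ℝ) (x : Fin (n+1) → ℝ) :
    dotProduct (Blast n) ((Qmat n α).mulVec x)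
      = ∑ k : Fin (n+1), (-(α * n)) ^ (n - (k:ℕ)) * x k := by
  rw [Blast, single_dotProduct, one_mul]
  rw [Matrix.mulVec, dotProduct]
  apply Finset.sum_congr rfl
  intro k _
  rw [Qmat, Matrix.of_apply, diagQ]

lemma shiftS (n : ℕ) (c : ℝ) (x : Fin (n+1) → ℝ) :
    ∑ k : Fin (n+1), c ^ (n - (k:ℕ)) * ((Umat n).mulVec x k)
      = c * (∑ k : Fin (n+1), c ^ (n - (k:ℕ)) * x k) - c ^ (n+1) * x 0 := by
  rw [Finset.mul_sum]
  rw [Fin.sum_univ_castSucc (f := fun k : Fin (n+1) => c ^ (n - (k:ℕ)) * ((Umat n).mulVec x k))]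
  rw [Fin.sum_univ_succ (f := fun k : Fin (n+1) => c * (c ^ (n - (k:ℕ)) * x k))]
  have hlast : (Umat n).mulVec x (Fin.last n) = 0 := by
    rw [Umat_mulVec, dif_neg (by simp [Fin.last])]
  rw [hlast, mul_zero, add_zero]
  have h0 : c * (c ^ (n - ((0 : Fin (n+1)):ℕ)) * x 0) = c ^ (n+1) * x 0 := by
    simp [pow_succ]; ring
  rw [h0, add_sub_cancel_left]
  apply Finset.sum_congr rfl
  intro i _
  rw [Umat_mulVec, dif_pos (by simpa using i.isLt)]
  have e1 : (⟨((i.castSucc : Fin (n+1)):ℕ)+1, by simpa using i.isLt⟩ : Fin (n+1)) = i.succ := by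
    apply Fin.ext; simp
  rw [e1]
  have e2 : n - ((i.castSucc : Fin (n+1)):ℕ) = (n - ((i.succ : Fin (n+1)):ℕ)) + 1 := by
    simp; omega
  rw [e2, pow_succ]
  ring

theorem stmt_19 (n : ℕ) (hn : 1 ≤ n) (α : ℝ) (χ : Fin (n+1) → ℝ) (γ : ℝ) :
    dotProduct (Blast n)
      ((Qmat n α).mulVec
        (-(dotProduct (B1 n) χ • (Umat n).mulVec ((Qmat n α)⁻¹.mulVec (B1 n))
            - γ • (Qmat n α)⁻¹.mulVec (B1 n))
          + (Umat n).mulVec χ)) =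
      -α * n * dotProduct (Blast n) ((Qmat n α).mulVec χ) := by
  set c : ℝ := -(α * n) with hc
  set w : Fin (n+1) → ℝ := (Qmat n α)⁻¹.mulVec (B1 n) with hw
  have hinv : Qmat n α * (Qmat n α)⁻¹ = 1 :=
    Matrix.mul_nonsing_inv _ (by rw [detQ]; exact isUnit_one)
  have hQw : (Qmat n α).mulVec w = B1 n := by
    rw [hw, Matrix.mulVec_mulVec, hinv, Matrix.one_mulVec]
  -- w 0 = 1
  have hw0 : w 0 = 1 := by
    have h1 : (Qmat n α).mulVec w 0 = B1 n 0 := by rw [hQw]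
    rw [B1, Pi.single_eq_same] at h1
    rw [Matrix.mulVec, dotProduct] at h1
    rw [Finset.sum_eq_single (0 : Fin (n+1))] at h1
    · rwa [Qmat_apply n α 0 0 le_rfl, if_pos rfl, one_mul] at h1
    · intro b _ hb
      rw [Qmat_apply n α 0 b (by simp), if_neg (by exact fun h => hb h.symm), zero_mul]
    · simp
  -- S w = 0
  have hSw : ∑ k : Fin (n+1), c ^ (n - (k:ℕ)) * w k = 0 := by
    have := blast_Q n α w
    rw [hQw, Blast, B1, single_dotProduct, one_mul, Pi.single_apply,
      if_neg (by simp [Fin.ext_iff]; omega)] at this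
    rw [← this]
  -- χ₀ = χ 0
  have hchi0 : dotProduct (B1 n) χ = χ 0 := by
    rw [B1, single_dotProduct, one_mul]
  rw [blast_Q, blast_Q]
  have expand : ∑ k : Fin (n+1), c ^ (n - (k:ℕ)) *
      ((-(dotProduct (B1 n) χ • (Umat n).mulVec w - γ • w) + (Umat n).mulVec χ) k)
      = -(χ 0) * (∑ k : Fin (n+1), c ^ (n - (k:ℕ)) * ((Umat n).mulVec w k))
        + γ * (∑ k : Fin (n+1), c ^ (n - (k:ℕ)) * w k)
        + ∑ k : Fin (n+1), c ^ (n - (k:ℕ)) * ((Umat n).mulVec χ k) := by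
    rw [hchi0, Finset.mul_sum, Finset.mul_sum, ← Finset.sum_add_distrib, ← Finset.sum_add_distrib]
    apply Finset.sum_congr rfl
    intro k _
    simp only [Pi.add_apply, Pi.neg_apply, Pi.sub_apply, Pi.smul_apply, smul_eq_mul]
    ring
  rw [expand, hSw, mul_zero, add_zero, shiftS n c w, shiftS n c χ, hSw, hw0, hc]
  ring
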